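/- Conversely to the strong fern lemma: if for all i, j ∈ {1,…,n} and all multi-indices α^{(1)},…,α^{(p)} ∈ ℤ_{≥0}^n one has Σ_{1 ≤ k_1,…,k_{p-1} ≤ n} ∏_{ℓ=1}^p H_{k_{ℓ-1}, α^{(ℓ)}+e_{k_ℓ}} = 0 (with k_0 = i, k_p = j), then JH is strongly nilpotent with index at most p: JH(X^{(1)})···JH(X^{(p)}) = 0 for all X^{(1)},…,X^{(p)} ∈ k^n. -/

import Mathlib

/-- The Jacobian matrix of the polynomial map `H : k^n → k^n`, evaluated at a point `x ∈ k^n`. -/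
noncomputable def jacEval {k : Type*} [Field k] {n : ℕ}
    (H : Fin n → MvPolynomial (Fin n) k) (x : Fin n → k) : Matrix (Fin n) (Fin n) k :=
  Matrix.of fun i j => MvPolynomial.eval x (MvPolynomial.pderiv j (H i))

/-- The coefficient `H_{i,β}`, i.e. `β!` times the coefficient of `X^β` in `H_i`, so that
`H_i = Σ_β (H_{i,β}/β!) X^β`. -/
noncomputable def coefSc {k : Type*} [Field k] {n : ℕ}
    (H : Fin n → MvPolynomial (Fin n) k) (i : Fin n) (β : Fin n →₀ ℕ) : k :=
  (β.prod fun _ m => (m.factorial : k)) * MvPolynomial.coeff β (H i)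

/-!
Write each entry of `JH(x)` as `Σ_α (x^α / α!) H_{a, α + e_b}`. Expanding the entries of
`JH(X⁽¹⁾) ⋯ JH(X⁽ᵖ⁾)` as sums over paths `i = κ₀, κ₁, …, κₚ = j` and multiplying out, the
`(i, j)` entry becomes `Σ_{α⁽¹⁾,…,α⁽ᵖ⁾} ∏_ℓ (X⁽ˡ⁾)^{α⁽ˡ⁾} / α⁽ˡ⁾!` times the fern sum for
`i, j, α⁽¹⁾, …, α⁽ᵖ⁾`, which vanishes by hypothesis.
-/

open MvPolynomial

namespace Matrix

variable {m R : Type*} [Fintype m] [DecidableEq m] [CommSemiring R]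

theorem list_ofFn_prod_apply (p : ℕ) (M : Fin p → Matrix m m R) (i j : m) :
    (List.ofFn M).prod i j =
      ∑ κ : Fin (p + 1) → m,
        if κ 0 = i ∧ κ (Fin.last p) = j then ∏ ℓ : Fin p, M ℓ (κ ℓ.castSucc) (κ ℓ.succ)
        else 0 := by
  induction p generalizing i with
  | zero =>
    rw [Fintype.sum_equiv (Equiv.funUnique (Fin 1) m) _ (fun x => if x = i ∧ x = j then 1 else 0)
      fun κ => by simp [Fin.last]]
    simp [Matrix.one_apply, ite_and]
  | succ p ih =>
    rw [List.ofFn_succ, List.prod_cons, Matrix.mul_apply]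
    simp_rw [ih, Finset.mul_sum]
    rw [Finset.sum_comm, ← (Fin.consEquiv fun _ : Fin (p + 2) => m).sum_comp,
      Fintype.sum_prod_type]
    conv_rhs => rw [Finset.sum_comm]
    refine Finset.sum_congr rfl fun κ _ => ?_
    simp only [Fin.consEquiv_apply, Fin.cons_zero, ← Fin.succ_last, Fin.cons_succ,
      Fin.prod_univ_succ, Fin.castSucc_zero, ← Fin.succ_castSucc]
    simp_rw [ite_and, mul_ite, mul_zero]
    rw [Finset.sum_ite_eq Finset.univ (κ 0), Finset.sum_ite_eq' Finset.univ i]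
    simp

theorem list_ofFn_prod_apply_of_eq_sum {ι : Type*} (S : Finset ι) (p : ℕ)
    (M : Fin p → Matrix m m R) (w : Fin p → ι → R) (c : m → m → ι → R)
    (hM : ∀ ℓ a b, M ℓ a b = ∑ α ∈ S, w ℓ α * c a b α) (i j : m) :
    (List.ofFn M).prod i j =
      ∑ A ∈ Fintype.piFinset fun _ => S, (∏ ℓ, w ℓ (A ℓ)) *
        ∑ κ : Fin (p + 1) → m,
          if κ 0 = i ∧ κ (Fin.last p) = j then ∏ ℓ : Fin p, c (κ ℓ.castSucc) (κ ℓ.succ) (A ℓ)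
          else 0 := by
  simp_rw [list_ofFn_prod_apply, hM, Finset.mul_sum]
  rw [Finset.sum_comm]
  refine Finset.sum_congr rfl fun κ _ => ?_
  split_ifs
  · simp_rw [Finset.prod_univ_sum, Finset.prod_mul_distrib]
  · simp

end Matrix

theorem Finsupp.prod_factorial_add_single {σ R : Type*} [DecidableEq σ] [Fintype σ]
    [CommSemiring R] (α : σ →₀ ℕ) (b : σ) :
    ((α + Finsupp.single b 1).prod fun _ m => (m.factorial : R)) =
      (α.prod fun _ m => (m.factorial : R)) * (α b + 1) := by
  rw [Finsupp.prod_fintype _ _ (fun _ => by simp), Finsupp.prod_fintype _ _ (fun _ => by simp),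
    Fintype.prod_eq_mul_prod_compl b, Fintype.prod_eq_mul_prod_compl b]
  have hcompl : ∀ u ∈ ({b}ᶜ : Finset σ), (α + Finsupp.single b 1 : σ →₀ ℕ) u = α u :=
    fun u hu => by simp_all [eq_comm]
  rw [Finset.prod_congr rfl fun u hu => by rw [hcompl u hu]]
  simp only [Finsupp.coe_add, Pi.add_apply, Finsupp.single_eq_same, Nat.factorial_succ,
    Nat.cast_mul, Nat.cast_add, Nat.cast_one]
  ring

theorem coefSc_add_single {k : Type*} [Field k] {n : ℕ} (H : Fin n → MvPolynomial (Fin n) k)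
    (a b : Fin n) (α : Fin n →₀ ℕ) :
    coefSc H a (α + Finsupp.single b 1) =
      (α.prod fun _ m => (m.factorial : k)) * coeff α (pderiv b (H a)) := by
  rw [coefSc, Finsupp.prod_factorial_add_single, coeff_pderiv]
  ring

theorem jacEval_apply_eq_sum {k : Type*} [Field k] [CharZero k] {n : ℕ}
    (H : Fin n → MvPolynomial (Fin n) k) (S : Finset (Fin n →₀ ℕ))
    (hS : ∀ a b, (pderiv b (H a)).support ⊆ S) (x : Fin n → k) (a b : Fin n) :
    jacEval H x a b =
      ∑ α ∈ S, ((α.prod fun _ m => (m.factorial : k))⁻¹ * ∏ u, x u ^ α u) *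
        coefSc H a (α + Finsupp.single b 1) := by
  rw [jacEval, Matrix.of_apply, eval_eq', Finset.sum_subset (hS a b) fun α _ hα => by
    rw [notMem_support_iff.mp hα, zero_mul]]
  refine Finset.sum_congr rfl fun α _ => ?_
  have hfact : (α.prod fun _ m => (m.factorial : k)) ≠ 0 :=
    Finsupp.prod_ne_zero_iff.mpr fun u _ => Nat.cast_ne_zero.mpr (Nat.factorial_ne_zero _)
  rw [coefSc_add_single]
  field_simp

theorem strong_fern_lemma_converse_general
    {k : Type*} [Field k] [CharZero k] {n : ℕ} (p : ℕ)
    (H : Fin n → MvPolynomial (Fin n) k)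
    (hfern : ∀ (i j : Fin n) (A : Fin p → (Fin n →₀ ℕ)),
      ∑ κ : Fin (p + 1) → Fin n,
        (if κ 0 = i ∧ κ (Fin.last p) = j then
          ∏ ℓ : Fin p, coefSc H (κ ℓ.castSucc) (A ℓ + Finsupp.single (κ ℓ.succ) 1)
        else 0) = 0) :
    ∀ X : Fin p → (Fin n → k),
      (List.ofFn fun ℓ : Fin p => jacEval H (X ℓ)).prod = 0 := by
  classical
  intro X
  let S := Finset.univ.biUnion fun a => Finset.univ.biUnion fun b => (pderiv b (H a)).support
  have hS : ∀ a b, (pderiv b (H a)).support ⊆ S := fun a b _ hα =>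
    Finset.mem_biUnion.mpr ⟨a, Finset.mem_univ a, Finset.mem_biUnion.mpr ⟨b, Finset.mem_univ b, hα⟩⟩
  ext i j
  rw [Matrix.list_ofFn_prod_apply_of_eq_sum S p _ _ _
    (fun ℓ a b => jacEval_apply_eq_sum H S hS (X ℓ) a b)]
  simp [hfern]

/-- Converse of the strong fern lemma: if the fern coefficient identities hold for all
`i, j` and all tuples of multi-indices `α⁽¹⁾,…,α⁽ᵖ⁾`, then `JH` is strongly nilpotent with
index at most `p`. -/
theorem strong_fern_lemma_converse
    {k : Type*} [Field k] [CharZero k] {n : ℕ} (p : ℕ) (hp : 0 < p)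
    (H : Fin n → MvPolynomial (Fin n) k)
    (hfern : ∀ (i j : Fin n) (A : Fin p → (Fin n →₀ ℕ)),
      ∑ κ : Fin (p + 1) → Fin n,
        (if κ 0 = i ∧ κ (Fin.last p) = j then
          ∏ ℓ : Fin p, coefSc H (κ ℓ.castSucc) (A ℓ + Finsupp.single (κ ℓ.succ) 1)
        else 0) = 0) :
    ∀ X : Fin p → (Fin n → k),
      (List.ofFn fun ℓ : Fin p => jacEval H (X ℓ)).prod = 0 :=
  strong_fern_lemma_converse_general p H hfern
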